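/- If τ is a finite sequence of distinct natural numbers with aix τ = 0, then for any natural number k not occurring in τ, aix f(k,τ) = 1 and des f(k,τ) = des τ. -/

import Mathlib

namespace PaperStats

/-- `des w` is the number of descents of the word `w` (0-indexed positions `i`
with `w(i) > w(i+1)`). -/
def des (w : List ℕ) : ℕ :=
  ((Finset.range (w.length - 1)).filter fun i => w.getD (i + 1) 0 < w.getD i 0).card

/-- `inv w` is the number of inversions of the word `w`: pairs of positions
`i < j` with `w(i) > w(j)`. -/
def inv (w : List ℕ) : ℕ :=
  ((Finset.range w.length ×ˢ Finset.range w.length).filter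
    fun p => p.1 < p.2 ∧ w.getD p.2 0 < w.getD p.1 0).card

/-- An inversion `(i,j)` of `w` is admissible if either `w(j) < w(j+1)`
(`j` is not the last position and is followed by an ascent), or there is a
position `k` strictly between `i` and `j` with `w(j) > w(k)`. -/
def IsAdmissible (w : List ℕ) (i j : ℕ) : Prop :=
  (j + 1 < w.length ∧ w.getD j 0 < w.getD (j + 1) 0) ∨
    ∃ k, i < k ∧ k < j ∧ w.getD k 0 < w.getD j 0

instance (w : List ℕ) (i j : ℕ) : Decidable (IsAdmissible w i j) :=
  decidable_of_iff ((j + 1 < w.length ∧ w.getD j 0 < w.getD (j + 1) 0) ∨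
      ∃ k ∈ Finset.Ioo i j, w.getD k 0 < w.getD j 0) (by
    unfold IsAdmissible
    simp only [Finset.mem_Ioo, and_assoc])

/-- `ai w` is the number of admissible inversions of `w`. -/
def ai (w : List ℕ) : ℕ :=
  ((Finset.range w.length ×ˢ Finset.range w.length).filter
    fun p => p.1 < p.2 ∧ w.getD p.2 0 < w.getD p.1 0 ∧ IsAdmissible w p.1 p.2).card

/-- `aid w = ai w + des w`. -/
def aid (w : List ℕ) : ℕ := ai w + des w

/-- The statistic `aix`, defined recursively: `aix ∅ = 0`; writing a nonempty
word as `π = α m β`, where `m` is the smallest letter and `α` is the maximal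
prefix not containing `m`, one has `aix π = 1 + aix β` if `α = ∅`,
`aix π = 0` if `β = ∅` (and `α ≠ ∅`), and `aix π = aix α` otherwise. -/
def aix : List ℕ → ℕ
  | [] => 0
  | x :: xs =>
    if (x :: xs).takeWhile (fun a => decide (a ≠ xs.foldr min x)) = [] then
      1 + aix (((x :: xs).dropWhile (fun a => decide (a ≠ xs.foldr min x))).tail)
    else if ((x :: xs).dropWhile (fun a => decide (a ≠ xs.foldr min x))).tail = [] then 0
    else aix ((x :: xs).takeWhile (fun a => decide (a ≠ xs.foldr min x)))
termination_by w => w.length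
decreasing_by
  all_goals simp only [List.foldr_attach] at *
  · have h1 := (List.dropWhile_sublist (l := x :: xs) (fun a => decide (a ≠ xs.foldr min x))).length_le
    have h2 := List.length_tail (l := (x :: xs).dropWhile (fun a => decide (a ≠ xs.foldr min x)))
    simp only [List.length_cons] at *
    omega
  · rename_i hα hβ
    have h0 : ((x :: xs).takeWhile (fun a => decide (a ≠ xs.foldr min x))) ++
        ((x :: xs).dropWhile (fun a => decide (a ≠ xs.foldr min x))) = x :: xs :=
      List.takeWhile_append_dropWhile ..
    have h1 : ((x :: xs).dropWhile (fun a => decide (a ≠ xs.foldr min x))) ≠ [] := by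
      intro h
      apply hβ
      rw [h]
      rfl
    have h2 := congrArg List.length h0
    simp only [List.length_append, List.length_cons] at h2
    have h3 : 0 < ((x :: xs).dropWhile (fun a => decide (a ≠ xs.foldr min x))).length :=
      List.length_pos_iff.mpr h1
    simp only [List.length_cons]
    omega

/-- The map `f(k,τ)`: with `m` the smallest letter of `τ` together with `k`
(`k` not occurring in `τ`), and `τ = α m β` with `α` the maximal prefix of `τ`
avoiding `m`: `f(k,∅) = k`; `f(k,τ) = kτ` if `k = m`; and for `k > m`,
`f(k,τ) = f(k,β) m` if `α = ∅`, `f(k,τ) = k m α` if `β = ∅`, and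
`f(k,τ) = f(k,α) m β` otherwise. -/
def fkt (k : ℕ) : List ℕ → List ℕ
  | [] => [k]
  | x :: xs =>
    if k < xs.foldr min x then k :: x :: xs
    else if (x :: xs).takeWhile (fun a => decide (a ≠ xs.foldr min x)) = [] then
      fkt k (((x :: xs).dropWhile (fun a => decide (a ≠ xs.foldr min x))).tail) ++
        [xs.foldr min x]
    else if ((x :: xs).dropWhile (fun a => decide (a ≠ xs.foldr min x))).tail = [] then
      k :: xs.foldr min x :: ((x :: xs).takeWhile (fun a => decide (a ≠ xs.foldr min x)))
    else
      fkt k ((x :: xs).takeWhile (fun a => decide (a ≠ xs.foldr min x))) ++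
        xs.foldr min x :: ((x :: xs).dropWhile (fun a => decide (a ≠ xs.foldr min x))).tail
termination_by w => w.length
decreasing_by
  all_goals simp only [List.foldr_attach] at *
  · have h1 := (List.dropWhile_sublist (l := x :: xs) (fun a => decide (a ≠ xs.foldr min x))).length_le
    have h2 := List.length_tail (l := (x :: xs).dropWhile (fun a => decide (a ≠ xs.foldr min x)))
    simp only [List.length_cons] at *
    omega
  · rename_i hk hα hβ
    have h0 : ((x :: xs).takeWhile (fun a => decide (a ≠ xs.foldr min x))) ++
        ((x :: xs).dropWhile (fun a => decide (a ≠ xs.foldr min x))) = x :: xs :=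
      List.takeWhile_append_dropWhile ..
    have h1 : ((x :: xs).dropWhile (fun a => decide (a ≠ xs.foldr min x))) ≠ [] := by
      intro h
      apply hβ
      rw [h]
      rfl
    have h2 := congrArg List.length h0
    simp only [List.length_append, List.length_cons] at h2
    have h3 : 0 < ((x :: xs).dropWhile (fun a => decide (a ≠ xs.foldr min x))).length :=
      List.length_pos_iff.mpr h1
    simp only [List.length_cons]
    omega

/-- `ini w` is the first letter of `w`. -/
def ini (w : List ℕ) : ℕ := w.headD 0

/-- The word of a permutation `π ∈ S_n`, namely `π(1) π(2) … π(n)`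
(with values in `{1, …, n}`). -/
def permList {n : ℕ} (π : Equiv.Perm (Fin n)) : List ℕ :=
  List.ofFn fun i => (π i : ℕ) + 1

/-- The bijection `φ`: `φ(π) = f(π(1), f(π(2), ⋯ f(π(n), ∅) ⋯ ))`. -/
def phiW (w : List ℕ) : List ℕ := w.foldr fkt []

/-- Helper: `decRun l` splits `l` into its maximal weakly decreasing prefix
and the rest. -/
def decRun : List ℕ → List ℕ × List ℕ
  | [] => ([], [])
  | [x] => ([x], [])
  | x :: y :: rest =>
    if y ≤ x then ((x :: (decRun (y :: rest)).1), (decRun (y :: rest)).2)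
    else ([x], y :: rest)

theorem decRun_append : ∀ l : List ℕ, (decRun l).1 ++ (decRun l).2 = l
  | [] => rfl
  | [x] => rfl
  | x :: y :: rest => by
    rw [decRun]
    split
    · simpa using decRun_append (y :: rest)
    · rfl

/-- Helper computing the hook factorization of a word from its reversal: the
rightmost hook of the word starts at its rightmost descent top, i.e. it is
obtained by extending the maximal weakly decreasing prefix of the reversed word
by one more letter; the process is repeated on what remains, and when no
letters usable for a hook remain the word left over is the increasing part
`π₀`. The result is `(π₀, [π₁, …, π_k])`. -/
def hookRev (r : List ℕ) : List ℕ × List (List ℕ) :=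
  match h : (decRun r).2 with
  | [] => (r.reverse, [])
  | z :: rest =>
    ((hookRev rest).1, (hookRev rest).2 ++ [z :: (decRun r).1.reverse])
termination_by r.length
decreasing_by
  have h2 := congrArg List.length (decRun_append r)
  rw [h] at h2
  simp only [List.length_append, List.length_cons] at h2
  omega

/-- The hook factorization `(π₀, [π₁, …, π_k])` of a word
`w = π₀ π₁ ⋯ π_k`, where `π₀` is increasing and each `π_i`, `i ≥ 1`, is a
hook. -/
def hookSplit (w : List ℕ) : List ℕ × List (List ℕ) := hookRev w.reverse

/-- `pix w` is the length of the initial increasing factor `π₀` in the hook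
factorization of `w`. -/
def pix (w : List ℕ) : ℕ := (hookSplit w).1.length

/-- `lec w` is the sum of the numbers of inversions of the hooks in the hook
factorization of `w`. -/
def lec (w : List ℕ) : ℕ := ((hookSplit w).2.map inv).sum

/-- A word `w(1) … w(r)` with `r ≥ 2` is a hook if
`w(1) > w(2) ≤ w(3) ≤ ⋯ ≤ w(r)`. -/
def IsHook (w : List ℕ) : Prop :=
  ∃ a b rest, w = a :: b :: rest ∧ b < a ∧ List.Chain' (· ≤ ·) (b :: rest)

/-- `w(i)` is a left-to-right maximum of `w` if `w(k) < w(i)` for all `k < i`. -/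
def IsLRMax (w : List ℕ) (i : ℕ) : Prop := ∀ k < i, w.getD k 0 < w.getD i 0

instance (w : List ℕ) (i : ℕ) : Decidable (IsLRMax w i) := by
  unfold IsLRMax; infer_instance

/-- `mix w` counts the pairs of positions `i < j` such that either
`w(i) > w(j)` and `w(i)` is a left-to-right maximum, or `w(i) < w(j)` and
there is `k < i` with `w(k) > w(j)`. -/
def mix (w : List ℕ) : ℕ :=
  ((Finset.range w.length ×ˢ Finset.range w.length).filter fun p =>
    p.1 < p.2 ∧ ((w.getD p.2 0 < w.getD p.1 0 ∧ IsLRMax w p.1) ∨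
      (w.getD p.1 0 < w.getD p.2 0 ∧ ∃ k ∈ Finset.range p.1, w.getD p.2 0 < w.getD k 0))).card

/-- `das w` counts the positions `i` such that either `w(i) > w(i+1)` and
`w(i)` is a left-to-right maximum, or `w(i) < w(i+1)` and there is `k < i`
with `w(k) > w(i+1)`. -/
def das (w : List ℕ) : ℕ :=
  ((Finset.range (w.length - 1)).filter fun i =>
    (w.getD (i + 1) 0 < w.getD i 0 ∧ IsLRMax w i) ∨
      (w.getD i 0 < w.getD (i + 1) 0 ∧ ∃ k ∈ Finset.range i, w.getD (i + 1) 0 < w.getD k 0)).card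

/-- The values of the left-to-right maxima of a word, listed in increasing
order (which is also their order of occurrence). -/
def lrMaxima : List ℕ → List ℕ
  | [] => []
  | x :: xs => x :: lrMaxima (xs.filter fun a => decide (x < a))
termination_by l => l.length
decreasing_by
  have := xs.length_filter_le (fun a => decide (x < a))
  simp only [List.length_cons]
  rw [List.length_unattach]
  exact Nat.lt_succ_of_le ((List.length_filter_le _ _).trans List.length_attach.le)

/-- `Bset w m` is the list of entries of `w` that are smaller than `m` and lie
to the right of (the first occurrence of) `m` in `w`. -/
def Bset (w : List ℕ) (m : ℕ) : List ℕ :=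
  ((w.dropWhile fun a => decide (a ≠ m)).tail).filter fun a => decide (a < m)

/-- Helper for `psiS`: replace the letters satisfying `P`, in order, by the
letters of the first list. -/
def replaceSub (P : ℕ → Bool) : List ℕ → List ℕ → List ℕ
  | _, [] => []
  | rs, x :: xs =>
    if P x then rs.headD x :: replaceSub P rs.tail xs else x :: replaceSub P rs xs

/-- `psiS S w` is `ψ_S(w)`: the result of reversing, in place, the subword of
`w` consisting of the entries belonging to `S`. -/
def psiS (S : List ℕ) (w : List ℕ) : List ℕ :=
  replaceSub (fun a => decide (a ∈ S)) ((w.filter fun a => decide (a ∈ S)).reverse) w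

/-- Helper applying the alternating composition
`ψ_{B₁} ∘ ψ_{B₂ ∩ B₁} ∘ ψ_{B₂} ∘ ⋯ ∘ ψ_{B_{k-1}} ∘ ψ_{B_k ∩ B_{k-1}} ∘ ψ_{B_k}`
to `w`, given the list `[B_k, B_{k-1}, …, B₁]`. -/
def psiChain : List (List ℕ) → List ℕ → List ℕ
  | [], w => w
  | [B], w => psiS B w
  | B :: B' :: rest, w => psiChain (B' :: rest) (psiS (B.inter B') (psiS B w))

/-- The Brändén–Claesson bijection `ψ`. -/
def psi (w : List ℕ) : List ℕ :=
  psiChain (((lrMaxima w).map (Bset w)).reverse) w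

end PaperStats

/-!
Split `τ = α m β` at its smallest letter. Both `aix` and `f(k, ·)` recurse along this
splitting, so everything follows by induction on it. Since `aix τ = 0`, the prefix `α` is
nonempty. If `k < m` then `f(k,τ) = kτ` starts with its smallest letter, so `aix` grows by
one and no descent is created. If `β = ∅`, then `f(k,τ) = k m α` trades the descent from
`α` down to `m` for the descent `k m`, and `aix (k m α) = aix k = 1`. Otherwise
`f(k,τ) = f(k,α) m β` with `m` still the smallest letter, and both statistics reduce to
those of `f(k,α)`.
-/

namespace List

variable {α : Type*}

theorem takeWhile_ne_append_cons [DecidableEq α] {u v : List α} {m : α} (hm : m ∉ u) :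
    (u ++ m :: v).takeWhile (fun a => decide (a ≠ m)) = u := by
  rw [takeWhile_append_of_pos fun a ha => by simpa using ne_of_mem_of_not_mem ha hm]
  simp

theorem dropWhile_ne_append_cons [DecidableEq α] {u v : List α} {m : α} (hm : m ∉ u) :
    (u ++ m :: v).dropWhile (fun a => decide (a ≠ m)) = m :: v := by
  rw [dropWhile_append_of_pos fun a ha => by simpa using ne_of_mem_of_not_mem ha hm]
  simp

section LinearOrder

variable [LinearOrder α]

theorem foldr_min_eq_iff {x m : α} {xs : List α} :
    xs.foldr min x = m ↔ m ∈ x :: xs ∧ ∀ a ∈ x :: xs, m ≤ a := by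
  rw [← foldl_eq_foldr]
  exact min_eq_iff (cons_ne_nil x xs)

theorem le_of_mem_append_cons {u v : List α} {m a : α} (hu : ∀ b ∈ u, m < b)
    (hv : ∀ b ∈ v, m ≤ b) (ha : a ∈ u ++ m :: v) : m ≤ a := by
  rw [mem_append, mem_cons] at ha
  rcases ha with ha | rfl | ha
  exacts [(hu a ha).le, le_rfl, hv a ha]

theorem exists_cons_eq_append_cons_foldr_min_eq {u v : List α} {m : α}
    (hu : ∀ a ∈ u, m < a) (hv : ∀ a ∈ v, m ≤ a) :
    ∃ x xs, x :: xs = u ++ m :: v ∧ xs.foldr min x = m := by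
  obtain ⟨x, xs, hxs⟩ := exists_cons_of_ne_nil (l := u ++ m :: v) (by simp)
  refine ⟨x, xs, hxs.symm, foldr_min_eq_iff.mpr ⟨by simp [← hxs], fun a ha => ?_⟩⟩
  exact le_of_mem_append_cons hu hv (hxs ▸ ha)

theorem exists_eq_append_cons_min {l : List α} (hl : l ≠ []) :
    ∃ u m v, l = u ++ m :: v ∧ (∀ a ∈ u, m < a) ∧ ∀ a ∈ v, m ≤ a := by
  obtain ⟨u, v, hmu, hl', -⟩ := exists_erase_eq (min_mem hl)
  have hle : ∀ a ∈ u ++ v, l.min hl ≤ a := fun a ha => min_le_of_mem (by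
    rw [hl']
    simp only [mem_append, mem_cons] at ha ⊢
    tauto)
  refine ⟨u, _, v, hl', fun a ha => ?_, fun a ha => hle a (by simp [ha])⟩
  exact (hle a (by simp [ha])).lt_of_ne (ne_of_mem_of_not_mem ha hmu).symm

theorem induction_on_append_cons_min {motive : List α → Prop} (nil : motive [])
    (append_cons : ∀ u m v, (∀ a ∈ u, m < a) → (∀ a ∈ v, m ≤ a) → motive u → motive v →
      motive (u ++ m :: v))
    (l : List α) : motive l := by
  induction l using (measure length).wf.induction with
  | _ l ih =>
    rcases eq_or_ne l [] with rfl | hl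
    · exact nil
    obtain ⟨u, m, v, rfl, hu, hv⟩ := exists_eq_append_cons_min hl
    have hlen : u.length < (u ++ m :: v).length ∧ v.length < (u ++ m :: v).length := by
      simp only [length_append, length_cons]
      omega
    exact append_cons u m v hu hv (ih u hlen.1) (ih v hlen.2)

end LinearOrder

end List

namespace PaperStats

section Splitting

variable {u v : List ℕ} {m : ℕ}

lemma aix_append_cons (hu : ∀ a ∈ u, m < a) (hv : ∀ a ∈ v, m ≤ a) :
    aix (u ++ m :: v) = if u = [] then 1 + aix v else if v = [] then 0 else aix u := by
  obtain ⟨x, xs, hxs, hmin⟩ := List.exists_cons_eq_append_cons_foldr_min_eq hu hv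
  have hmu : m ∉ u := fun h => (hu m h).false
  rw [← hxs, aix, hmin, hxs, List.takeWhile_ne_append_cons hmu,
    List.dropWhile_ne_append_cons hmu]
  rfl

lemma fkt_append_cons (k : ℕ) (hu : ∀ a ∈ u, m < a) (hv : ∀ a ∈ v, m ≤ a) :
    fkt k (u ++ m :: v) = if k < m then k :: (u ++ m :: v)
      else if u = [] then fkt k v ++ [m]
      else if v = [] then k :: m :: u
      else fkt k u ++ m :: v := by
  obtain ⟨x, xs, hxs, hmin⟩ := List.exists_cons_eq_append_cons_foldr_min_eq hu hv
  have hmu : m ∉ u := fun h => (hu m h).false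
  rw [← hxs, fkt, hmin, hxs, List.takeWhile_ne_append_cons hmu,
    List.dropWhile_ne_append_cons hmu]
  rfl

end Splitting

lemma aix_cons_of_forall_le {m : ℕ} {v : List ℕ} (hv : ∀ a ∈ v, m ≤ a) :
    aix (m :: v) = 1 + aix v := by
  simpa using aix_append_cons (u := []) (by simp) hv

lemma aix_singleton (k : ℕ) : aix [k] = 1 := by
  simp [aix_cons_of_forall_le, aix.eq_1]

lemma aix_cons_cons_of_lt {k m : ℕ} {u : List ℕ} (hmk : m < k) (hu0 : u ≠ [])
    (hu : ∀ a ∈ u, m < a) : aix (k :: m :: u) = 1 := by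
  rw [← List.singleton_append, aix_append_cons (by simpa using hmk) fun a ha => (hu a ha).le,
    if_neg (List.cons_ne_nil k []), if_neg hu0, aix_singleton]

lemma fkt_perm (k : ℕ) (τ : List ℕ) : (fkt k τ).Perm (k :: τ) := by
  induction τ using List.induction_on_append_cons_min with
  | nil => rw [fkt]
  | append_cons u m v hu hv ihu ihv =>
    rw [fkt_append_cons k hu hv]
    split_ifs with _ hu0 hv0
    · rfl
    · subst hu0
      simpa using (ihv.append_right [m]).trans ((List.perm_append_singleton m v).cons k)
    · subst hv0
      exact (List.perm_append_singleton m u).symm.cons k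
    · exact ihu.append_right (m :: v)

lemma fkt_ne_nil (k : ℕ) (τ : List ℕ) : fkt k τ ≠ [] :=
  fun h => by simpa [h] using (fkt_perm k τ).length_eq

lemma lt_of_mem_fkt {k m : ℕ} {τ : List ℕ} (hmk : m < k) (hτ : ∀ a ∈ τ, m < a) :
    ∀ a ∈ fkt k τ, m < a := fun a ha => by
  rcases List.mem_cons.mp ((fkt_perm k τ).subset ha) with rfl | ha
  exacts [hmk, hτ a ha]

lemma des_singleton (a : ℕ) : des [a] = 0 := rfl

lemma des_cons_cons (a b : ℕ) (l : List ℕ) :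
    des (a :: b :: l) = (if b < a then 1 else 0) + des (b :: l) := by
  unfold des
  simp only [List.length_cons, Nat.add_sub_cancel]
  rw [Finset.card_filter, Finset.card_filter, Finset.sum_range_succ']
  simp only [List.getD_cons_succ, List.getD_cons_zero]
  omega

lemma des_cons_of_forall_lt {k : ℕ} {l : List ℕ} (h : ∀ a ∈ l, k < a) :
    des (k :: l) = des l := by
  cases l with
  | nil => rfl
  | cons a l => simp [des_cons_cons, (h a (by simp)).not_gt]

lemma des_append_cons {u v : List ℕ} {m : ℕ} (hu : u ≠ []) (hm : ∀ a ∈ u, m < a) :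
    des (u ++ m :: v) = des u + 1 + des (m :: v) := by
  obtain ⟨a, u, rfl⟩ := List.exists_cons_of_ne_nil hu
  induction u generalizing a with
  | nil => simp [des_cons_cons, des_singleton, hm a (by simp)]
  | cons b u ih =>
    rw [List.cons_append, List.cons_append, des_cons_cons, ← List.cons_append,
      ih b (by simp) fun c hc => hm c (List.mem_cons_of_mem a hc), des_cons_cons]
    omega

lemma des_cons_cons_of_lt {k m : ℕ} {u : List ℕ} (hmk : m < k) (hu0 : u ≠ [])
    (hu : ∀ a ∈ u, m < a) : des (k :: m :: u) = des (u ++ [m]) := by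
  rw [des_cons_cons, if_pos hmk, des_cons_of_forall_lt hu, des_append_cons hu0 hu,
    des_singleton, add_zero, add_comm]

theorem aix_fkt_of_aix_eq_zero_general (k : ℕ) (τ : List ℕ) (hk : k ∉ τ)
    (h0 : aix τ = 0) :
    aix (fkt k τ) = 1 ∧ des (fkt k τ) = des τ := by
  induction τ using List.induction_on_append_cons_min with
  | nil =>
    rw [fkt]
    exact ⟨aix_singleton k, rfl⟩
  | append_cons u m v hu hv ihu _ =>
    have hkm_ne : k ≠ m := by rintro rfl; simp at hk
    rw [aix_append_cons hu hv] at h0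
    rw [fkt_append_cons k hu hv]
    rcases hkm_ne.lt_or_gt with hkm | hmk
    · have hk_lt : ∀ a ∈ u ++ m :: v, k < a := fun a ha =>
        hkm.trans_le (List.le_of_mem_append_cons hu hv ha)
      rw [if_pos hkm, aix_cons_of_forall_le fun a ha => (hk_lt a ha).le,
        aix_append_cons hu hv, h0]
      exact ⟨rfl, des_cons_of_forall_lt hk_lt⟩
    have hu0 : u ≠ [] := by rintro rfl; simp at h0
    rw [if_neg hmk.not_gt, if_neg hu0]
    split_ifs at h0 ⊢ with hv0
    · subst hv0
      exact ⟨aix_cons_cons_of_lt hmk hu0 hu, des_cons_cons_of_lt hmk hu0 hu⟩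
    · obtain ⟨ih_aix, ih_des⟩ := ihu (fun h => hk (by simp [h])) h0
      have hfkt := lt_of_mem_fkt hmk hu
      rw [aix_append_cons hfkt hv, if_neg (fkt_ne_nil k u), if_neg hv0,
        des_append_cons (fkt_ne_nil k u) hfkt, des_append_cons hu0 hu, ih_des]
      exact ⟨ih_aix, rfl⟩

/-- If `aix τ = 0`, then `aix f(k,τ) = 1` and
`des f(k,τ) = des τ`. -/
theorem aix_fkt_of_aix_eq_zero (k : ℕ) (τ : List ℕ) (hτ : τ.Nodup) (hk : k ∉ τ)
    (h0 : aix τ = 0) :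
    aix (fkt k τ) = 1 ∧ des (fkt k τ) = des τ :=
  aix_fkt_of_aix_eq_zero_general k τ hk h0

end PaperStats
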